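/- Let ΓD be a connected cubic graph with a bridge (a,b), and let c and d be the other two neighbours of a. Suppose (c,d) is an edge of ΓD and that c and d have a common third neighbour e, and let g be the third neighbour of e (besides c and d). Then the edge (e,g) is a bridge of ΓD, and the graph obtained from ΓD by deleting the four vertices a, c, d, e (together with their incident edges) and adding the edge (b,g) is a connected cubic graph in which the edge (b,g) is a bridge. -/

import Mathlib

open SimpleGraph

/-- A graph is cubic if every vertex has exactly three neighbours. -/
def IsCubic {V : Type*} (G : SimpleGraph V) : Prop :=
  ∀ v : V, (G.neighborSet v).ncard = 3

/-- A cracker of `G`: a nonempty set of edges of `G`, no two of which share a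
vertex, whose deletion disconnects `G`, while no proper subset disconnects `G`. -/
def IsCracker {V : Type*} (G : SimpleGraph V) (C : Set (Sym2 V)) : Prop :=
  C.Nonempty ∧ C ⊆ G.edgeSet ∧
    C.Pairwise (fun e f => ∀ v : V, ¬(v ∈ e ∧ v ∈ f)) ∧
    ¬(G.deleteEdges C).Connected ∧
    ∀ C' : Set (Sym2 V), C' ⊂ C → (G.deleteEdges C').Connected

/-- A `k`-cracker is a cracker consisting of `k` edges. -/
def IsKCracker {V : Type*} (G : SimpleGraph V) (C : Set (Sym2 V)) (k : ℕ) : Prop :=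
  IsCracker G C ∧ C.ncard = k

/-- Delete the vertices a, c, d, e (with their incident edges) and add the edge
(b,g). -/
def removeDiamond {V : Type*} (G : SimpleGraph V) (a c d e b g : V) :
    SimpleGraph {x : V // x ≠ a ∧ x ≠ c ∧ x ≠ d ∧ x ≠ e} :=
  SimpleGraph.fromRel (fun p q => G.Adj p.1 q.1 ∨ (p.1 = b ∧ q.1 = g))

/-!
Let `B` be the set of vertices reachable from `b` without the bridge `ab`. The four diamond
vertices `a, c, d, e` have all their neighbours among themselves, `b` and `g`, so the only edges
leaving `{a, c, d, e}` are `ab` and `eg`, and the only edge leaving `{a, c, d, e} ∪ B` is `eg`,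
which is therefore a bridge. After the diamond is replaced by the edge `bg`, the vertices `b` and
`g` have each lost one neighbour and gained one, and `B` is left only through `bg`.
-/

namespace SimpleGraph

variable {V : Type*} {G : SimpleGraph V}

theorem Reachable.mem_of_adj_closed {S : Set V} {u v : V}
    (hS : ∀ ⦃x y⦄, x ∈ S → G.Adj x y → y ∈ S) (h : G.Reachable u v) (hu : u ∈ S) : v ∈ S := by
  by_contra hv
  obtain ⟨p⟩ := h
  obtain ⟨d, -, hd, hd'⟩ := p.exists_boundary_dart S hu hv
  exact hd' (hS hd d.adj)

theorem isBridge_of_adj_leaving_eq {S : Set V} {u v : V} (hu : u ∈ S) (hv : v ∉ S)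
    (hS : ∀ ⦃x y⦄, x ∈ S → y ∉ S → G.Adj x y → x = u ∧ y = v) : G.IsBridge s(u, v) := by
  refine isBridge_iff.2 fun h => hv (h.mem_of_adj_closed (fun x y hx hxy => ?_) hu)
  rw [deleteEdges_adj] at hxy
  by_contra hy
  obtain ⟨rfl, rfl⟩ := hS hx hy hxy.1
  exact hxy.2 rfl

theorem reachable_deleteEdges_of_adj {a b u x y : V}
    (hx : (G.deleteEdges {s(a, b)}).Reachable u x) (hxy : G.Adj x y) (hne : s(x, y) ≠ s(a, b)) :
    (G.deleteEdges {s(a, b)}).Reachable u y :=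
  hx.trans (Adj.reachable (deleteEdges_adj.2 ⟨hxy, hne⟩))

theorem isBridge_of_adj_leaving_eq_or_eq {S : Set V} {a b e g : V}
    (ha : a ∈ S) (he : e ∈ S) (hg : g ∉ S) (hbg : ¬(G.deleteEdges {s(a, b)}).Reachable b g)
    (hS : ∀ ⦃x y⦄, x ∈ S → y ∉ S → G.Adj x y → (x = a ∧ y = b) ∨ (x = e ∧ y = g)) :
    G.IsBridge s(e, g) := by
  set B := {x | (G.deleteEdges {s(a, b)}).Reachable b x}
  have hb : b ∈ B := Reachable.refl b
  refine isBridge_of_adj_leaving_eq (S := S ∪ B) (.inl he) (by simp [hg, B, hbg]) ?_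
  rintro x y (hx | hx) hy hxy <;> simp only [Set.mem_union, not_or] at hy
  · rcases hS hx hy.1 hxy with ⟨-, rfl⟩ | h
    · exact absurd hb hy.2
    · exact h
  · by_cases hne : s(x, y) = s(a, b)
    · rcases Sym2.eq_iff.1 hne with ⟨-, hyb⟩ | ⟨-, hya⟩
      · exact (hy.2 (hyb ▸ hb)).elim
      · exact (hy.1 (hya ▸ ha)).elim
    · exact absurd (reachable_deleteEdges_of_adj hx hxy hne) hy.2

end SimpleGraph

open SimpleGraph

theorem IsCubic.neighborSet_eq {V : Type*} {G : SimpleGraph V} (hcub : IsCubic G) {v x y z : V}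
    (hx : G.Adj v x) (hy : G.Adj v y) (hz : G.Adj v z) (hxy : x ≠ y) (hxz : x ≠ z)
    (hyz : y ≠ z) : G.neighborSet v = {x, y, z} := by
  have hsub : ({x, y, z} : Set V) ⊆ G.neighborSet v := by
    rintro w (rfl | rfl | rfl | rfl) <;> assumption
  have hfin : (G.neighborSet v).Finite :=
    Set.finite_of_ncard_ne_zero (by rw [hcub v]; norm_num)
  refine (Set.eq_of_subset_of_ncard_le hsub ?_ hfin).symm
  rw [hcub v, Set.ncard_insert_of_notMem (by simp [hxy, hxz]), Set.ncard_pair hyz]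

theorem IsCubic.eq_or_eq_or_eq_of_adj {V : Type*} {G : SimpleGraph V} (hcub : IsCubic G)
    {v x y z : V} (hx : G.Adj v x) (hy : G.Adj v y) (hz : G.Adj v z) (hxy : x ≠ y)
    (hxz : x ≠ z) (hyz : y ≠ z) ⦃w : V⦄ (hw : G.Adj v w) : w = x ∨ w = y ∨ w = z := by
  have : w ∈ G.neighborSet v := hw
  simpa [hcub.neighborSet_eq hx hy hz hxy hxz hyz] using this

theorem IsCubic.adj_leaving_diamond_eq {V : Type*} {G : SimpleGraph V} (hcub : IsCubic G)
    {a b c d e g : V} (hab : G.Adj a b) (hac : G.Adj a c) (had : G.Adj a d) (hcd : G.Adj c d)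
    (hce : G.Adj c e) (hde : G.Adj d e) (heg : G.Adj e g) (hcb : c ≠ b) (hdb : d ≠ b)
    (hea : e ≠ a) (hgc : g ≠ c) (hgd : g ≠ d) ⦃x y : V⦄ (hx : x ∈ ({a, c, d, e} : Set V))
    (hy : y ∉ ({a, c, d, e} : Set V)) (hxy : G.Adj x y) : (x = a ∧ y = b) ∨ (x = e ∧ y = g) := by
  simp only [Set.mem_insert_iff, Set.mem_singleton_iff] at hx hy
  rcases hx with rfl | rfl | rfl | rfl
  · grind [hcub.eq_or_eq_or_eq_of_adj hab hac had hcb.symm hdb.symm hcd.ne hxy]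
  · grind [hcub.eq_or_eq_or_eq_of_adj hac.symm hcd hce had.ne hea.symm hde.ne hxy]
  · grind [hcub.eq_or_eq_or_eq_of_adj had.symm hcd.symm hde hac.ne hea.symm hce.ne hxy]
  · grind [hcub.eq_or_eq_or_eq_of_adj hce.symm hde.symm heg hcd.ne hgc.symm hgd.symm hxy]

section removeDiamond

variable {V : Type*} {G : SimpleGraph V} {a c d e b g : V}

theorem removeDiamond_adj_of_adj {p q : {x : V // x ≠ a ∧ x ≠ c ∧ x ≠ d ∧ x ≠ e}}
    (h : G.Adj p.1 q.1) : (removeDiamond G a c d e b g).Adj p q :=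
  (fromRel_adj _ _ _).2 ⟨fun hpq => h.ne (congrArg Subtype.val hpq), .inl (.inl h)⟩

theorem removeDiamond_adj_iff (hbg : b ≠ g) {p q : {x : V // x ≠ a ∧ x ≠ c ∧ x ≠ d ∧ x ≠ e}} :
    (removeDiamond G a c d e b g).Adj p q ↔ G.Adj p.1 q.1 ∨ s(p.1, q.1) = s(b, g) := by
  rw [removeDiamond, fromRel_adj, Sym2.eq_iff]
  constructor
  · rintro ⟨-, (h | h) | (h | ⟨h, h'⟩)⟩
    · exact .inl h
    · exact .inr (.inl h)
    · exact .inl h.symm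
    · exact .inr (.inr ⟨h', h⟩)
  · rintro (h | ⟨hp, hq⟩ | ⟨hp, hq⟩)
    · exact ⟨fun hpq => h.ne (congrArg Subtype.val hpq), .inl (.inl h)⟩
    · exact ⟨fun hpq => hbg (hp ▸ hq ▸ congrArg Subtype.val hpq), .inl (.inr ⟨hp, hq⟩)⟩
    · exact ⟨fun hpq => hbg (hq ▸ hp ▸ congrArg Subtype.val hpq.symm), .inr (.inr ⟨hq, hp⟩)⟩

theorem removeDiamond_connected (hG : G.Connected) (hb : b ≠ a ∧ b ≠ c ∧ b ≠ d ∧ b ≠ e)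
    (hg : g ≠ a ∧ g ≠ c ∧ g ≠ d ∧ g ≠ e) (hbdry : ∀ ⦃x y⦄, x ∈ ({a, c, d, e} : Set V) →
      y ∉ ({a, c, d, e} : Set V) → G.Adj x y → y = b ∨ y = g) :
    (removeDiamond G a c d e b g).Connected := by
  set S : Set V := {a, c, d, e}
  have hmem : ∀ x : V, x ∉ S ↔ x ≠ a ∧ x ≠ c ∧ x ≠ d ∧ x ≠ e := by simp [S]
  set T : Set V := S ∪ {x | ∃ hx, (removeDiamond G a c d e b g).Reachable ⟨b, hb⟩ ⟨x, hx⟩}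
  have hbT : b ∈ T := .inr ⟨hb, .rfl⟩
  have hgT : g ∈ T := by
    refine .inr ⟨hg, ?_⟩
    by_cases hbg : b = g
    · subst hbg; rfl
    · exact ((removeDiamond_adj_iff hbg).2 (.inr rfl)).reachable
  have hT : ∀ ⦃x y⦄, x ∈ T → G.Adj x y → y ∈ T := by
    intro x y hx hxy
    by_cases hy : y ∈ S
    · exact .inl hy
    rcases hx with hx | ⟨hx, hbx⟩
    · rcases hbdry hx hy hxy with rfl | rfl
      · exact hbT
      · exact hgT
    · exact .inr ⟨(hmem y).1 hy, hbx.trans (removeDiamond_adj_of_adj hxy).reachable⟩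
  have hreach : ∀ p, (removeDiamond G a c d e b g).Reachable ⟨b, hb⟩ p := by
    rintro ⟨x, hx⟩
    rcases (hG.preconnected b x).mem_of_adj_closed hT hbT with hxS | ⟨_, h⟩
    · exact ((hmem x).2 hx hxS).elim
    · exact h
  exact (connected_iff _).2 ⟨fun p q => (hreach p).symm.trans (hreach q), ⟨⟨b, hb⟩⟩⟩

theorem image_val_neighborSet_removeDiamond (hbg : b ≠ g)
    (p : {x : V // x ≠ a ∧ x ≠ c ∧ x ≠ d ∧ x ≠ e}) :
    Subtype.val '' (removeDiamond G a c d e b g).neighborSet p =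
      {q | q ∉ ({a, c, d, e} : Set V) ∧ (G.Adj p.1 q ∨ s(p.1, q) = s(b, g))} := by
  ext q
  constructor
  · rintro ⟨q, hq, rfl⟩
    exact ⟨by simpa using q.2, (removeDiamond_adj_iff hbg).1 hq⟩
  · rintro ⟨hq, h⟩
    exact ⟨⟨q, by simpa using hq⟩, (removeDiamond_adj_iff hbg).2 h, rfl⟩

theorem removeDiamond_isCubic (hcub : IsCubic G) (hb : b ≠ a ∧ b ≠ c ∧ b ≠ d ∧ b ≠ e)
    (hg : g ≠ a ∧ g ≠ c ∧ g ≠ d ∧ g ≠ e) (hbg : b ≠ g) (hnbg : ¬G.Adj b g) (hab : G.Adj a b)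
    (heg : G.Adj e g) (hbdry : ∀ ⦃x y⦄, x ∈ ({a, c, d, e} : Set V) →
      y ∉ ({a, c, d, e} : Set V) → G.Adj x y → (x = a ∧ y = b) ∨ (x = e ∧ y = g)) :
    IsCubic (removeDiamond G a c d e b g) := by
  rintro p
  rw [← Set.ncard_image_of_injective _ Subtype.val_injective,
    image_val_neighborSet_removeDiamond hbg]
  obtain ⟨p, hp⟩ := p
  have hpS : p ∉ ({a, c, d, e} : Set V) := by simpa using hp
  have hbdry' : ∀ ⦃q⦄, G.Adj p q → q ∈ ({a, c, d, e} : Set V) →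
      (q = a ∧ p = b) ∨ (q = e ∧ p = g) :=
    fun q hpq hq => hbdry hq hpS hpq.symm
  by_cases hpb : p = b
  · subst hpb
    rw [← hcub p, ← Set.ncard_exchange (s := G.neighborSet p) hnbg hab.symm]
    congr 1
    ext q
    simp only [Set.mem_ofPred_eq, Set.mem_insert_iff, Set.mem_sdiff, mem_neighborSet,
      Set.mem_singleton_iff, Sym2.eq_iff]
    grind
  by_cases hpg : p = g
  · subst hpg
    rw [← hcub p, ← Set.ncard_exchange (s := G.neighborSet p) (fun h => hnbg h.symm) heg.symm]
    congr 1
    ext q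
    simp only [Set.mem_ofPred_eq, Set.mem_insert_iff, Set.mem_sdiff, mem_neighborSet,
      Set.mem_singleton_iff, Sym2.eq_iff]
    grind
  · rw [← hcub p]
    congr 1
    ext q
    simp only [Set.mem_ofPred_eq, mem_neighborSet, Sym2.eq_iff]
    grind

theorem removeDiamond_isBridge (hb : b ≠ a ∧ b ≠ c ∧ b ≠ d ∧ b ≠ e)
    (hg : g ≠ a ∧ g ≠ c ∧ g ≠ d ∧ g ≠ e) (hbg : ¬(G.deleteEdges {s(a, b)}).Reachable b g) :
    (removeDiamond G a c d e b g).IsBridge s(⟨b, hb⟩, ⟨g, hg⟩) := by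
  have hne : b ≠ g := by
    rintro rfl
    exact hbg .rfl
  refine isBridge_of_adj_leaving_eq
    (S := Subtype.val ⁻¹' {x | (G.deleteEdges {s(a, b)}).Reachable b x}) (Reachable.refl b) hbg ?_
  rintro ⟨x, hx⟩ ⟨y, hy⟩ hxB hyB hxy
  rcases (removeDiamond_adj_iff hne).1 hxy with h | h
  · exact (hyB (reachable_deleteEdges_of_adj hxB h (by simp [hx.1, hy.1]))).elim
  · rcases Sym2.eq_iff.1 h with ⟨hxb, hyg⟩ | ⟨-, hyb⟩
    · exact ⟨Subtype.ext hxb, Subtype.ext hyg⟩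
    · exact (hyB (hyb ▸ Reachable.refl b)).elim

end removeDiamond

/-- the inverse of a type 1 parthenogenic operation (removal of a
parthenogenic diamond). If (a,b) is a bridge, the other neighbours c, d of a are
adjacent and have a common third neighbour e with third neighbour g, then (e,g) is a
bridge of the original graph, and deleting a, c, d, e and adding the edge (b,g)
yields a connected cubic graph in which (b,g) is a bridge. -/
theorem inverse_parth1_spec {V : Type*} (G : SimpleGraph V)
    (hG : G.Connected) (hcub : IsCubic G) (a b c d e g : V)
    (hbr : G.IsBridge s(a, b))
    (hac : G.Adj a c) (had : G.Adj a d) (hcd' : c ≠ d) (hcb : c ≠ b) (hdb : d ≠ b)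
    (hcd : G.Adj c d)
    (hce : G.Adj c e) (hde : G.Adj d e) (hea : e ≠ a)
    (heg : G.Adj e g) (hgc : g ≠ c) (hgd : g ≠ d) :
    G.IsBridge s(e, g) ∧
      ∃ (hb : b ≠ a ∧ b ≠ c ∧ b ≠ d ∧ b ≠ e) (hg : g ≠ a ∧ g ≠ c ∧ g ≠ d ∧ g ≠ e),
        (removeDiamond G a c d e b g).Connected ∧
          IsCubic (removeDiamond G a c d e b g) ∧
          (removeDiamond G a c d e b g).IsBridge s(⟨b, hb⟩, ⟨g, hg⟩) := by
  have hab : G.Adj a b := hbr.reachable_iff_adj.1 (hG.preconnected a b)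
  have hnab : ¬(G.deleteEdges {s(a, b)}).Reachable a b := isBridge_iff.1 hbr
  have hdel : ∀ ⦃x y⦄, G.Adj x y → x ≠ a → x ≠ b → (G.deleteEdges {s(a, b)}).Adj x y :=
    fun x y h hxa hxb => deleteEdges_adj.2 ⟨h, by simp [hxa, hxb]⟩
  have hae : (G.deleteEdges {s(a, b)}).Reachable a e :=
    (hdel hac.symm hac.ne' hcb).reachable.symm.trans (hdel hce hac.ne' hcb).reachable
  have hbe : b ≠ e := fun h => hnab (h ▸ hae)
  have hnbg : ¬(G.deleteEdges {s(a, b)}).Reachable b g :=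
    fun h => hnab (hae.trans ((hdel heg hea hbe.symm).reachable.trans h.symm))
  have hga : g ≠ a := by
    rintro rfl
    rcases hcub.eq_or_eq_or_eq_of_adj hab hac had hcb.symm hdb.symm hcd' heg.symm with h | h | h
    exacts [hbe h.symm, hce.ne' h, hde.ne' h]
  have hbdry := hcub.adj_leaving_diamond_eq hab hac had hcd hce hde heg hcb hdb hea hgc hgd
  have hb : b ≠ a ∧ b ≠ c ∧ b ≠ d ∧ b ≠ e := ⟨hab.ne', hcb.symm, hdb.symm, hbe⟩
  have hg : g ≠ a ∧ g ≠ c ∧ g ≠ d ∧ g ≠ e := ⟨hga, hgc, hgd, heg.ne'⟩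
  have hbg : b ≠ g := fun h => hnbg (h ▸ .rfl)
  have hnadj_bg : ¬G.Adj b g := fun h => hnbg (hdel h.symm hga hbg.symm).reachable.symm
  refine ⟨isBridge_of_adj_leaving_eq_or_eq (by simp) (by simp) (by simpa using hg) hnbg hbdry,
    hb, hg, removeDiamond_connected hG hb hg fun x y hx hy hxy => ?_,
    removeDiamond_isCubic hcub hb hg hbg hnadj_bg hab heg hbdry, removeDiamond_isBridge hb hg hnbg⟩
  exact (hbdry hx hy hxy).imp And.right And.right
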